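/- Subject Reduction for set policies: if N is a coherent system, ⊢N:ok, and N → N', then N' is coherent and ⊢N':ok. -/
import Mathlib


universe u

/-! ## Basic framework: trust levels, agents, membranes, systems -/

/-- Trust levels: `loc` (unknown), `lgood`, `lbad`. -/
inductive TrustLev : Type where
  | loc : TrustLev
  | lgood : TrustLev
  | lbad : TrustLev
deriving DecidableEq

/-- The subtyping order `<:` on trust levels: it is reflexive and satisfies
`loc <: lgood` and `loc <: lbad`. -/
def TrustLev.sub (t1 t2 : TrustLev) : Prop := t1 = t2 ∨ t1 = TrustLev.loc

/-- Agents, parametric on the type `Act` of basic actions, the type `Loc` of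
localities, and the type `Pol` of policies (digests carried by `go`). -/
inductive Agent (Act Loc : Type) (Pol : Type u) where
  | nil : Agent Act Loc Pol
  | act : Act → Agent Act Loc Pol → Agent Act Loc Pol
  | go : Loc → Pol → Agent Act Loc Pol → Agent Act Loc Pol
  | par : Agent Act Loc Pol → Agent Act Loc Pol → Agent Act Loc Pol
  | repl : Agent Act Loc Pol → Agent Act Loc Pol

/-- A membrane: a trust function on localities together with a policy.
(The partial trust function is modelled as a total function, the level `loc`
standing for ``unknown''.) -/
structure Membrane (Loc : Type) (Pol : Type u) where
  trust : Loc → TrustLev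
  pol : Pol

/-- Systems: the empty system, a site `l[M]{P}`, or a parallel composition. -/
inductive System (Act Loc : Type) (Pol : Type u) where
  | empty : System Act Loc Pol
  | site : Loc → Membrane Loc Pol → Agent Act Loc Pol → System Act Loc Pol
  | par : System Act Loc Pol → System Act Loc Pol → System Act Loc Pol

variable {Act Loc : Type} {Pol : Type u}

/-- The list of sites (name and membrane) occurring in a system. -/
def System.sites : System Act Loc Pol → List (Loc × Membrane Loc Pol)
  | System.empty => []
  | System.site l M _ => [(l, M)]
  | System.par N1 N2 => N1.sites ++ N2.sites

/-- A site named `l` with membrane `M` is trustworthy if `M_t(l) = lgood`. -/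
def Trustworthy (l : Loc) (M : Membrane Loc Pol) : Prop :=
  M.trust l = TrustLev.lgood

/-- A system is coherent if `M^k_t(l) <: M^l_t(l)` for every trustworthy site `k`
and every site `l` of the system. -/
def Coherent (N : System Act Loc Pol) : Prop :=
  ∀ p ∈ N.sites, Trustworthy p.1 p.2 →
    ∀ q ∈ N.sites, TrustLev.sub (p.2.trust q.1) (q.2.trust q.1)

/-- `SiteIn l M P N` holds when the site `l[M]{P}` occurs in the system `N`. -/
inductive SiteIn (l : Loc) (M : Membrane Loc Pol) (P : Agent Act Loc Pol) :
    System Act Loc Pol → Prop where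
  | here : SiteIn l M P (System.site l M P)
  | left {N1 N2} : SiteIn l M P N1 → SiteIn l M P (System.par N1 N2)
  | right {N1 N2} : SiteIn l M P N2 → SiteIn l M P (System.par N1 N2)

/-- Structural equivalence on agents: `|` is commutative and associative with
unit `nil`, replication unfolds, and `≡` is a congruence for `|`. -/
inductive AgEq : Agent Act Loc Pol → Agent Act Loc Pol → Prop where
  | refl (P) : AgEq P P
  | symm {P Q} : AgEq P Q → AgEq Q P
  | trans {P Q R} : AgEq P Q → AgEq Q R → AgEq P R
  | parNil (P) : AgEq (Agent.par P Agent.nil) P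
  | parComm (P Q) : AgEq (Agent.par P Q) (Agent.par Q P)
  | parAssoc (P Q R) :
      AgEq (Agent.par (Agent.par P Q) R) (Agent.par P (Agent.par Q R))
  | replUnfold (P Q) :
      AgEq (Agent.par (Agent.repl P) Q) (Agent.par P (Agent.par (Agent.repl P) Q))
  | parCong {P P' Q Q'} : AgEq P P' → AgEq Q Q' → AgEq (Agent.par P Q) (Agent.par P' Q')

/-- Structural equivalence on systems. -/
inductive StrEq : System Act Loc Pol → System Act Loc Pol → Prop where
  | refl (N) : StrEq N N
  | symm {N1 N2} : StrEq N1 N2 → StrEq N2 N1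
  | trans {N1 N2 N3} : StrEq N1 N2 → StrEq N2 N3 → StrEq N1 N3
  | parEmpty (N) : StrEq (System.par N System.empty) N
  | parComm (N1 N2) : StrEq (System.par N1 N2) (System.par N2 N1)
  | parAssoc (N1 N2 N3) :
      StrEq (System.par (System.par N1 N2) N3) (System.par N1 (System.par N2 N3))
  | parCong {N1 N1' N2 N2'} :
      StrEq N1 N1' → StrEq N2 N2' → StrEq (System.par N1 N2) (System.par N1' N2')
  | site (l M) {P Q} : AgEq P Q → StrEq (System.site l M P) (System.site l M Q)

/-- The reduction relation over systems, parametric on the `enforces`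
relation `enf` between policies and on the typechecking relation `typ`
between agents and policies.  In rule `mig`, if the target site `l` trusts
the source site `k` then the digest `T` is checked against `l`'s policy,
otherwise the full code `P` is typechecked. -/
inductive Red (enf : Pol → Pol → Prop) (typ : Agent Act Loc Pol → Pol → Prop) :
    System Act Loc Pol → System Act Loc Pol → Prop where
  | act (l M a P Q) :
      Red enf typ (System.site l M (Agent.par (Agent.act a P) Q))
        (System.site l M (Agent.par P Q))
  | par {N1 N1'} (N2) :
      Red enf typ N1 N1' → Red enf typ (System.par N1 N2) (System.par N1' N2)
  | struct {N N1 N1' N'} :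
      StrEq N N1 → Red enf typ N1 N1' → StrEq N1' N' → Red enf typ N N'
  | mig (k Mk l Ml T P Q R) :
      (if Ml.trust k = TrustLev.lgood then enf T Ml.pol else typ P Ml.pol) →
      Red enf typ
        (System.par (System.site k Mk (Agent.par (Agent.go l T P) Q))
          (System.site l Ml R))
        (System.par (System.site k Mk Q) (System.site l Ml (Agent.par P R)))

/-- The labelled transition system over agents, with labels in `Act ⊕ Loc`. -/
inductive Step : Agent Act Loc Pol → (Act ⊕ Loc) → Agent Act Loc Pol → Prop where
  | act (a P) : Step (Agent.act a P) (Sum.inl a) P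
  | mig (l T P) : Step (Agent.go l T P) (Sum.inr l) Agent.nil
  | repl {P α P'} :
      Step (Agent.par P (Agent.repl P)) α P' → Step (Agent.repl P) α P'
  | parL {P1 α P1'} (P2) :
      Step P1 α P1' → Step (Agent.par P1 P2) α (Agent.par P1' P2)
  | parR {P1 α P1'} (P2) :
      Step P1 α P1' → Step (Agent.par P2 P1) α (Agent.par P2 P1')

/-- `Trace P σ P'` means `P →σ P'`: the composite of the single steps of `σ`. -/
inductive Trace : Agent Act Loc Pol → List (Act ⊕ Loc) → Agent Act Loc Pol → Prop where
  | nil (P) : Trace P [] P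
  | cons {P α P' σ P''} : Step P α P' → Trace P' σ P'' → Trace P (α :: σ) P''

/-- The thread components of an agent: every agent is `P1 | ... | Pn`
with each `Pi` a thread (not itself a parallel composition). -/
def Agent.comps : Agent Act Loc Pol → List (Agent Act Loc Pol)
  | Agent.par P Q => P.comps ++ Q.comps
  | P => [P]

/-- A thread is an agent which is not a parallel composition. -/
def Agent.IsThread : Agent Act Loc Pol → Prop
  | Agent.par _ _ => False
  | _ => True

/-! ## Set policies -/

/-- A (set) policy: a finite subset of `Act ⊕ Loc`. -/
abbrev SPolicy (Act Loc : Type) : Type := Finset (Act ⊕ Loc)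

/-- Typechecking of agents against set policies, `⊢ P : T`. -/
inductive Types : Agent Act Loc (SPolicy Act Loc) → SPolicy Act Loc → Prop where
  | nil (T) : Types Agent.nil T
  | act {a P T} : Sum.inl a ∈ T → Types P T → Types (Agent.act a P) T
  | go {l T' P T} : Sum.inr l ∈ T → Types P T' → Types (Agent.go l T' P) T
  | par {P Q T} : Types P T → Types Q T → Types (Agent.par P Q) T
  | repl {P T} : Types P T → Types (Agent.repl P) T

/-- Well-formedness of systems, `⊢ N : ok`, for set policies. -/
inductive Ok : System Act Loc (SPolicy Act Loc) → Prop where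
  | empty : Ok System.empty
  | par {N1 N2} : Ok N1 → Ok N2 → Ok (System.par N1 N2)
  | siteU {l M P} : ¬ Trustworthy l M → Ok (System.site l M P)
  | siteG {l M P} : Trustworthy l M → Types P M.pol → Ok (System.site l M P)

/-! ## Auxiliary lemmas -/

lemma types_mono {P : Agent Act Loc (SPolicy Act Loc)} {T T' : SPolicy Act Loc}
    (h : Types P T) (hs : T ⊆ T') : Types P T' := by
  induction h with
  | nil => exact Types.nil _
  | act h1 _ ih => exact Types.act (hs h1) (ih hs)
  | go h1 h2 => exact Types.go (hs h1) h2
  | par _ _ ih1 ih2 => exact Types.par (ih1 hs) (ih2 hs)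
  | repl _ ih => exact Types.repl (ih hs)

lemma ageq_types {P Q : Agent Act Loc (SPolicy Act Loc)} (h : AgEq P Q) :
    ∀ T, Types P T ↔ Types Q T := by
  induction h with
  | refl P => exact fun T => Iff.rfl
  | symm _ ih => exact fun T => (ih T).symm
  | trans _ _ ih1 ih2 => exact fun T => (ih1 T).trans (ih2 T)
  | parNil P =>
    intro T
    constructor
    · intro h; cases h with | par h1 _ => exact h1
    · intro h; exact Types.par h (Types.nil T)
  | parComm P Q =>
    intro T
    constructor <;> · intro h; cases h with | par h1 h2 => exact Types.par h2 h1
  | parAssoc P Q R =>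
    intro T
    constructor
    · intro h
      cases h with | par h1 h2 =>
      cases h1 with | par h3 h4 =>
      exact Types.par h3 (Types.par h4 h2)
    · intro h
      cases h with | par h1 h2 =>
      cases h2 with | par h3 h4 =>
      exact Types.par (Types.par h1 h3) h4
  | replUnfold P Q =>
    intro T
    constructor
    · intro h
      cases h with | par h1 h2 =>
      cases h1 with | repl h3 =>
      exact Types.par h3 (Types.par (Types.repl h3) h2)
    · intro h
      cases h with | par _ h2 =>
      cases h2 with | par h3 h4 => exact Types.par h3 h4
  | parCong _ _ ih1 ih2 =>
    intro T
    constructor <;>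
    · intro h
      cases h with | par h1 h2 =>
      first
        | exact Types.par ((ih1 T).mp h1) ((ih2 T).mp h2)
        | exact Types.par ((ih1 T).mpr h1) ((ih2 T).mpr h2)

lemma streq_sites {N1 N2 : System Act Loc Pol} (h : StrEq N1 N2) :
    N1.sites.Perm N2.sites := by
  induction h with
  | refl N => exact List.Perm.refl _
  | symm _ ih => exact ih.symm
  | trans _ _ ih1 ih2 => exact ih1.trans ih2
  | parEmpty N => simp [System.sites]
  | parComm N1 N2 => exact List.perm_append_comm
  | parAssoc N1 N2 N3 => simp [System.sites, List.append_assoc]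
  | parCong _ _ ih1 ih2 => exact ih1.append ih2
  | site l M _ => exact List.Perm.refl _

lemma streq_ok {N1 N2 : System Act Loc (SPolicy Act Loc)} (h : StrEq N1 N2) :
    Ok N1 ↔ Ok N2 := by
  induction h with
  | refl N => exact Iff.rfl
  | symm _ ih => exact ih.symm
  | trans _ _ ih1 ih2 => exact ih1.trans ih2
  | parEmpty N =>
    constructor
    · intro h; cases h with | par h1 _ => exact h1
    · intro h; exact Ok.par h Ok.empty
  | parComm N1 N2 =>
    constructor <;> · intro h; cases h with | par h1 h2 => exact Ok.par h2 h1
  | parAssoc N1 N2 N3 =>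
    constructor
    · intro h
      cases h with | par h1 h2 =>
      cases h1 with | par h3 h4 => exact Ok.par h3 (Ok.par h4 h2)
    · intro h
      cases h with | par h1 h2 =>
      cases h2 with | par h3 h4 => exact Ok.par (Ok.par h1 h3) h4
  | parCong _ _ ih1 ih2 =>
    constructor <;>
    · intro h
      cases h with | par h1 h2 =>
      first
        | exact Ok.par (ih1.mp h1) (ih2.mp h2)
        | exact Ok.par (ih1.mpr h1) (ih2.mpr h2)
  | site l M hPQ =>
    constructor
    · intro h
      cases h with
      | siteU h => exact Ok.siteU h
      | siteG h ht => exact Ok.siteG h ((ageq_types hPQ _).mp ht)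
    · intro h
      cases h with
      | siteU h => exact Ok.siteU h
      | siteG h ht => exact Ok.siteG h ((ageq_types hPQ _).mpr ht)

lemma red_sites {enf : Pol → Pol → Prop} {typ : Agent Act Loc Pol → Pol → Prop}
    {N N' : System Act Loc Pol} (h : Red enf typ N N') :
    N.sites.Perm N'.sites := by
  induction h with
  | act l M a P Q => exact List.Perm.refl _
  | par N2 _ ih => exact ih.append_right _
  | struct h1 _ h2 ih => exact (streq_sites h1).trans (ih.trans (streq_sites h2))
  | mig k Mk l Ml T P Q R _ => exact List.Perm.refl _

lemma coherent_perm {N N' : System Act Loc Pol}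
    (h : N.sites.Perm N'.sites) (hc : Coherent N) : Coherent N' :=
  fun p hp ht q hq => hc p (h.mem_iff.mpr hp) ht q (h.mem_iff.mpr hq)

lemma coherent_parL {N1 N2 : System Act Loc Pol}
    (h : Coherent (System.par N1 N2)) : Coherent N1 :=
  fun p hp ht q hq =>
    h p (by simp [System.sites]; exact Or.inl hp) ht q
      (by simp [System.sites]; exact Or.inl hq)

lemma red_ok {N N' : System Act Loc (SPolicy Act Loc)}
    (hred : Red (fun T1 T2 : SPolicy Act Loc => T1 ⊆ T2) Types N N') :
    Coherent N → Ok N → Ok N' := by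
  induction hred with
  | act l M a P Q =>
    intro _ hok
    cases hok with
    | siteU h => exact Ok.siteU h
    | siteG h ht =>
      cases ht with | par h1 h2 =>
      cases h1 with | act _ hP => exact Ok.siteG h (Types.par hP h2)
  | par N2 _ ih =>
    intro hc hok
    cases hok with | par h1 h2 => exact Ok.par (ih (coherent_parL hc) h1) h2
  | struct h1 _ h2 ih =>
    intro hc hok
    exact (streq_ok h2).mp (ih (coherent_perm (streq_sites h1) hc) ((streq_ok h1).mp hok))
  | mig k Mk l Ml T P Q R hcond =>
    intro hc hok
    cases hok with | par hk hl =>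
    refine Ok.par ?_ ?_
    · cases hk with
      | siteU h => exact Ok.siteU h
      | siteG h ht => cases ht with | par _ h2 => exact Ok.siteG h h2
    · by_cases htl : Trustworthy l Ml
      · have hR : Types R Ml.pol := by
          cases hl with
          | siteU h => exact absurd htl h
          | siteG _ ht => exact ht
        have hP : Types P Ml.pol := by
          by_cases hmk : Ml.trust k = TrustLev.lgood
          · rw [if_pos hmk] at hcond
            have hmemL : ((l, Ml) : Loc × Membrane Loc (SPolicy Act Loc)) ∈
                (System.par (System.site k Mk (Agent.par (Agent.go l T P) Q))
                  (System.site l Ml R)).sites := by simp [System.sites]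
            have hmemK : ((k, Mk) : Loc × Membrane Loc (SPolicy Act Loc)) ∈
                (System.par (System.site k Mk (Agent.par (Agent.go l T P) Q))
                  (System.site l Ml R)).sites := by simp [System.sites]
            have hsub := hc (l, Ml) hmemL htl (k, Mk) hmemK
            have hkt : Trustworthy k Mk := by
              rcases hsub with h | h
              · unfold Trustworthy; rw [← h]; exact hmk
              · rw [hmk] at h; exact TrustLev.noConfusion h
            cases hk with
            | siteU h => exact absurd hkt h
            | siteG _ ht =>
              cases ht with | par h1 _ =>
              cases h1 with | go _ hP' => exact types_mono hP' hcond
          · rw [if_neg hmk] at hcond; exact hcond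
        exact Ok.siteG htl (Types.par hP hR)
      · exact Ok.siteU htl

/-- **Subject Reduction for set policies**: if `N` is a coherent system,
`⊢ N : ok`, and `N → N'`, then `N'` is coherent and `⊢ N' : ok`. -/
theorem subject_reduction_set
    {N N' : System Act Loc (SPolicy Act Loc)}
    (hcoh : Coherent N) (hok : Ok N)
    (hred : Red (fun T1 T2 : SPolicy Act Loc => T1 ⊆ T2) Types N N') :
    Coherent N' ∧ Ok N' := by
  exact ⟨coherent_perm (red_sites hred) hcoh, red_ok hred hcoh hok⟩
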